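/- Majorization step for selected residuals: suppose S_t is a subset of [n] of size k that minimizes Σ_{i∈S}|u_i| over size-k subsets, where u ∈ ℝⁿ, and suppose B ⊆ [n] satisfies |B ∩ S_t| ≤ |B^c ∖ S_t| where B^c = [n]∖B. Then there exists an injection π from B ∩ S_t into B^c ∖ S_t such that |u_i| ≤ |u_{π(i)}| for every i ∈ B ∩ S_t. -/
import Mathlib


open Finset

theorem stmt19 {n : ℕ} (u : Fin n → ℝ) (k : ℕ)
    (St : Finset (Fin n)) (hcard : St.card = k)
    (hmin : ∀ S : Finset (Fin n), S.card = k → ∑ i ∈ St, |u i| ≤ ∑ i ∈ S, |u i|)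
    (B : Finset (Fin n)) (hsize : (B ∩ St).card ≤ (Bᶜ \ St).card) :
    ∃ π : Fin n → Fin n, Set.InjOn π ↑(B ∩ St) ∧
      ∀ i ∈ B ∩ St, π i ∈ Bᶜ \ St ∧ |u i| ≤ |u (π i)| := by
  -- key: any i ∈ St, j ∉ St satisfy |u i| ≤ |u j|
  have key : ∀ i ∈ St, ∀ j ∉ St, |u i| ≤ |u j| := by
    intro i hi j hj
    have hji : j ∉ St.erase i := fun h => hj (Finset.mem_of_mem_erase h)
    have hScard : (insert j (St.erase i)).card = k := by
      rw [Finset.card_insert_of_notMem hji, Finset.card_erase_of_mem hi, hcard]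
      have : 1 ≤ k := hcard ▸ Finset.card_pos.mpr ⟨i, hi⟩
      omega
    have := hmin _ hScard
    rw [Finset.sum_insert hji, ← Finset.add_sum_erase _ _ hi] at this
    linarith
  -- choose a subset of Bᶜ \ St of the right cardinality
  obtain ⟨T, hTsub, hTcard⟩ := Finset.exists_subset_card_eq hsize
  have e := Finset.equivOfCardEq (hTcard.symm ▸ rfl : (B ∩ St).card = T.card)
  by_cases hne : (B ∩ St).Nonempty
  · obtain ⟨i0, hi0⟩ := hne
    refine ⟨fun i => if h : i ∈ B ∩ St then (e ⟨i, h⟩ : Fin n) else i0, ?_, ?_⟩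
    · intro a ha b hb hab
      simp only [Finset.mem_coe] at ha hb
      simp only [dif_pos ha, dif_pos hb] at hab
      have := e.injective (Subtype.ext hab)
      exact congrArg Subtype.val this
    · intro i hi
      simp only [dif_pos hi]
      have hmem : ((e ⟨i, hi⟩ : T) : Fin n) ∈ T := (e ⟨i, hi⟩).2
      refine ⟨hTsub hmem, ?_⟩
      have hiSt : i ∈ St := (Finset.mem_inter.mp hi).2
      have hj : ((e ⟨i, hi⟩ : T) : Fin n) ∉ St :=
        (Finset.mem_sdiff.mp (hTsub hmem)).2
      exact key i hiSt _ hj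
  · refine ⟨id, ?_, ?_⟩
    · intro a ha; simp_all [Finset.not_nonempty_iff_eq_empty.mp hne]
    · intro i hi; exact absurd ⟨i, hi⟩ hne
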